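/- Let g be the Lie algebra over ℂ with basis h, x, y and brackets [h,x] = nx, [h,y] = my, [x,y] = 0, where n, m are positive coprime integers. Then the center of the universal enveloping algebra U(g) is trivial, i.e., equals ℂ. -/

import Mathlib

/-!
The PBW monomials `x^i y^j h^a` form a basis of `U(g)`, and `ad h` is diagonal in it with
eigenvalue `n i + m j`, which vanishes only for `i = j = 0` since `n, m > 0`. A central element
is therefore a polynomial `p(h)`. Commuting it past `x` gives `p(h) x = x p(h + n)`, so
`p(t + n) = p(t)`, and a periodic polynomial in characteristic zero is constant.
-/

open UniversalEnvelopingAlgebra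

attribute [local instance 100] LieRing.ofAssociativeRing

theorem UniversalEnvelopingAlgebra.ι_mul_ι {R L : Type*} [CommRing R] [LieRing L]
    [LieAlgebra R L] (x y : L) : ι R x * ι R y = ι R y * ι R x + ι R ⁅x, y⁆ := by
  rw [LieHom.map_lie, Ring.lie_def]
  abel

theorem UniversalEnvelopingAlgebra.adjoin_range_ι_basis {κ R L : Type*} [CommRing R] [LieRing L]
    [LieAlgebra R L] (b : Module.Basis κ R L) :
    Algebra.adjoin R (Set.range fun i => ι R (b i)) = ⊤ := by
  rw [eq_top_iff]
  rintro u -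
  obtain ⟨t, rfl⟩ : ∃ t, mkAlgHom R L t = u := RingCon.mkₐ_surjective _ u
  induction t using TensorAlgebra.induction with
  | algebraMap r => exact Subalgebra.algebraMap_mem _ r
  | ι v =>
    have hspan : Submodule.span R (Set.range fun i => ι R (b i)) ≤
        Subalgebra.toSubmodule (Algebra.adjoin R (Set.range fun i => ι R (b i))) :=
      Submodule.span_le.mpr Algebra.subset_adjoin
    apply hspan
    have hv : v ∈ Submodule.span R (Set.range b) := b.span_eq ▸ trivial
    have := Submodule.mem_map_of_mem (f := (ι R (L := L)).toLinearMap) hv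
    rwa [Submodule.map_span, ← Set.range_comp] at this
  | mul t₁ t₂ h₁ h₂ => rw [map_mul]; exact mul_mem h₁ h₂
  | add t₁ t₂ h₁ h₂ => rw [map_add]; exact add_mem h₁ h₂

theorem Submodule.eq_top_of_one_mem_of_mul_mem {R A : Type*} [CommSemiring R] [Semiring A]
    [Algebra R A] {S : Set A} (hS : Algebra.adjoin R S = ⊤) {N : Submodule R A} (h1 : 1 ∈ N)
    (hmul : ∀ s ∈ S, ∀ x ∈ N, s * x ∈ N) : N = ⊤ := by
  have hstable : ∀ a ∈ Algebra.adjoin R S, ∀ x ∈ N, a * x ∈ N := by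
    intro a ha
    induction ha using Algebra.adjoin_induction with
    | mem s hs => exact hmul s hs
    | algebraMap r => exact fun x hx => by rw [← Algebra.smul_def]; exact N.smul_mem r hx
    | add a a' _ _ ha ha' =>
      exact fun x hx => by rw [add_mul]; exact add_mem (ha x hx) (ha' x hx)
    | mul a a' _ _ ha ha' => exact fun x hx => by rw [mul_assoc]; exact ha _ (ha' x hx)
  refine eq_top_iff.mpr fun a _ => ?_
  simpa using hstable a (hS ▸ trivial) 1 h1

theorem Module.Basis.map_lie_of_forall_map_lie {κ R L L' : Type*} [CommRing R] [LieRing L]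
    [LieAlgebra R L] [LieRing L'] [LieAlgebra R L'] (b : Module.Basis κ R L) (f : L →ₗ[R] L')
    (h : ∀ i j, f ⁅b i, b j⁆ = ⁅f (b i), f (b j)⁆) (x y : L) : f ⁅x, y⁆ = ⁅f x, f y⁆ := by
  have := LinearMap.ext_basis (B := (LieModule.toEnd R L L : L →ₗ[R] Module.End R L).compr₂ f)
    (B' := (LieModule.toEnd R L' L' : L' →ₗ[R] Module.End R L').compl₁₂ f f) b b h
  exact LinearMap.congr_fun₂ this x y

theorem Module.Basis.repr_apply_of_forall_apply_eq_smul {κ R M : Type*} [CommSemiring R]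
    [AddCommMonoid M] [Module R M] (b : Module.Basis κ R M) {f : M →ₗ[R] M} {w : κ → R}
    (hf : ∀ i, f (b i) = w i • b i) (x : M) (i : κ) : b.repr (f x) i = w i * b.repr x i := by
  have : Finsupp.lapply i ∘ₗ b.repr.toLinearMap ∘ₗ f =
      w i • (Finsupp.lapply i ∘ₗ b.repr.toLinearMap) := b.ext fun j => by
    by_cases hij : j = i <;> simp [hf, hij]
  exact LinearMap.congr_fun this x

theorem mul_pow_eq_pow_mul_add_smul {R A : Type*} [CommSemiring R] [Semiring A] [Algebra R A]
    {a x : A} {c : R} (hx : a * x = x * a + c • x) (i : ℕ) :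
    a * x ^ i = x ^ i * a + ((i : R) * c) • x ^ i := by
  induction i with
  | zero => simp
  | succ i ih =>
    rw [pow_succ, ← mul_assoc, ih, add_mul, mul_assoc, hx, mul_add, ← mul_assoc, smul_mul_assoc,
      mul_smul_comm, add_assoc, ← add_smul, Nat.cast_succ, add_one_mul, add_comm c]

section Polynomial

open Polynomial

theorem Polynomial.aeval_mul_eq_mul_aeval_comp {R A : Type*} [CommSemiring R] [Semiring A]
    [Algebra R A] {a x : A} {c : R} (hx : a * x = x * a + c • x) (p : R[X]) :
    aeval a p * x = x * aeval a (p.comp (X + C c)) := by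
  have hsemiconj : SemiconjBy x (a + algebraMap R A c) a := by
    rw [SemiconjBy, mul_add, ← Algebra.commutes, ← Algebra.smul_def, hx]
  rw [aeval_comp]
  induction p using Polynomial.induction_on' with
  | add p q hp hq => simp only [map_add, add_mul, mul_add, hp, hq]
  | monomial k r =>
    simp only [aeval_monomial, map_add, aeval_X, aeval_C]
    rw [mul_assoc, ← (hsemiconj.pow_right k).eq, ← mul_assoc, Algebra.commutes, mul_assoc]

theorem Polynomial.eq_C_of_comp_X_add_C_eq_self {R : Type*} [CommRing R] [IsDomain R]
    [CharZero R] {p : R[X]} {c : R} (hc : c ≠ 0) (hp : p.comp (X + C c) = p) :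
    p = C (p.eval 0) := by
  have hperiodic (k : ℕ) : p.eval (k * c) = p.eval 0 := by
    induction k with
    | zero => simp
    | succ k ih =>
      calc p.eval ((k + 1 : ℕ) * c) = (p.comp (X + C c)).eval (k * c) := by
            simp [eval_comp, add_mul]
        _ = p.eval 0 := by rw [hp, ih]
  refine sub_eq_zero.mp (eq_zero_of_infinite_isRoot _ ?_)
  refine Set.infinite_of_injective_forall_mem (f := fun k : ℕ => (k : R) * c) ?_ fun k => ?_
  · exact fun k l hkl => Nat.cast_injective (mul_right_cancel₀ hc hkl)
  · simp [hperiodic]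

end Polynomial

/-- `b 0, b 1, b 2` play the roles of `h, x, y`. -/
structure IsWeightBasis {R g : Type*} [CommRing R] [LieRing g] [LieAlgebra R g]
    (b : Module.Basis (Fin 3) R g) (n m : R) : Prop where
  lie_h_x : ⁅b 0, b 1⁆ = n • b 1
  lie_h_y : ⁅b 0, b 2⁆ = m • b 2
  lie_x_y : ⁅b 1, b 2⁆ = 0

/-! A faithful model of `U(g)`: on `R[t, u, v]` (the variables `X 0, X 1, X 2`) let `x, y` act
by multiplication by `u, v` and `h` by `t + n u ∂_u + m v ∂_v`. Then `x^i y^j h^a` sends `1` to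
`u^i v^j t^a`, which makes the PBW monomials linearly independent. -/
namespace PolyModel

open MvPolynomial

variable {R : Type*} [CommRing R] (n m : R)

noncomputable def h : Module.End R (MvPolynomial (Fin 3) R) :=
  LinearMap.mulLeft R (X 0) + n • (LinearMap.mulLeft R (X 1) ∘ₗ (pderiv 1).toLinearMap) +
    m • (LinearMap.mulLeft R (X 2) ∘ₗ (pderiv 2).toLinearMap)

variable (R) in
noncomputable def x : Module.End R (MvPolynomial (Fin 3) R) := LinearMap.mulLeft R (X 1)

variable (R) in
noncomputable def y : Module.End R (MvPolynomial (Fin 3) R) := LinearMap.mulLeft R (X 2)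

theorem h_apply (p : MvPolynomial (Fin 3) R) :
    h n m p = X 0 * p + n • (X 1 * pderiv 1 p) + m • (X 2 * pderiv 2 p) := rfl

theorem lie_h_x : ⁅h n m, x R⁆ = n • x R := by
  refine LinearMap.ext fun p => ?_
  simp only [Ring.lie_def, LinearMap.sub_apply, Module.End.mul_apply, LinearMap.smul_apply, x,
    LinearMap.mulLeft_apply, h_apply, Derivation.leibniz, pderiv_X_self,
    pderiv_X_of_ne (show (1 : Fin 3) ≠ 2 by decide), smul_eq_mul, smul_eq_C_mul]
  ring

theorem lie_h_y : ⁅h n m, y R⁆ = m • y R := by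
  refine LinearMap.ext fun p => ?_
  simp only [Ring.lie_def, LinearMap.sub_apply, Module.End.mul_apply, LinearMap.smul_apply, y,
    LinearMap.mulLeft_apply, h_apply, Derivation.leibniz, pderiv_X_self,
    pderiv_X_of_ne (show (2 : Fin 3) ≠ 1 by decide), smul_eq_mul, smul_eq_C_mul]
  ring

theorem lie_x_y : ⁅x R, y R⁆ = 0 := by
  refine LinearMap.ext fun p => ?_
  simp [x, y, Ring.lie_def, mul_left_comm]

theorem h_pow_apply_one (a : ℕ) : (h n m ^ a) 1 = (X 0 : MvPolynomial (Fin 3) R) ^ a := by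
  induction a with
  | zero => simp
  | succ a ih =>
    rw [pow_succ', Module.End.mul_apply, ih, h_apply]
    simp [Derivation.leibniz_pow, pow_succ']

end PolyModel

section PBW

variable {R g : Type*} [CommRing R] [LieRing g] [LieAlgebra R g] {b : Module.Basis (Fin 3) R g}
  {n m : R}

noncomputable def IsWeightBasis.lieHomOf (hb : IsWeightBasis b n m) {L : Type*} [LieRing L]
    [LieAlgebra R L] (h x y : L) (hhx : ⁅h, x⁆ = n • x) (hhy : ⁅h, y⁆ = m • y)
    (hxy : ⁅x, y⁆ = 0) : g →ₗ⁅R⁆ L :=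
  { b.constr R ![h, x, y] with
    map_lie' := by
      intro u v
      set f := b.constr R ![h, x, y]
      have hf0 : f (b 0) = h := b.constr_basis _ _ _
      have hf1 : f (b 1) = x := b.constr_basis _ _ _
      have hf2 : f (b 2) = y := b.constr_basis _ _ _
      clear_value f
      refine b.map_lie_of_forall_map_lie f (fun i j => ?_) u v
      have h1 : ⁅b 1, b 0⁆ = -(n • b 1) := by rw [← lie_skew, hb.lie_h_x]
      have h2 : ⁅b 2, b 0⁆ = -(m • b 2) := by rw [← lie_skew, hb.lie_h_y]
      have h3 : ⁅b 2, b 1⁆ = 0 := by rw [← lie_skew, hb.lie_x_y, neg_zero]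
      fin_cases i <;> fin_cases j <;>
        simp [hb.lie_h_x, hb.lie_h_y, hb.lie_x_y, h1, h2, h3, hf0, hf1, hf2, hhx, hhy, hxy,
          ← lie_skew x, ← lie_skew y] }

noncomputable def IsWeightBasis.polyRep (hb : IsWeightBasis b n m) :
    g →ₗ⁅R⁆ Module.End R (MvPolynomial (Fin 3) R) :=
  hb.lieHomOf _ _ _ (PolyModel.lie_h_x n m) (PolyModel.lie_h_y n m) PolyModel.lie_x_y

variable (b) in
noncomputable def pbwMonomial (e : Fin 3 →₀ ℕ) : UniversalEnvelopingAlgebra R g :=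
  ι R (b 1) ^ e 1 * ι R (b 2) ^ e 2 * ι R (b 0) ^ e 0

variable (b) in
theorem pbwMonomial_mul_ι_h (e : Fin 3 →₀ ℕ) :
    pbwMonomial b e * ι R (b 0) = pbwMonomial b (e + Finsupp.single 0 1) := by
  simp [pbwMonomial, pow_succ, mul_assoc]

variable (b) in
theorem ι_x_mul_pbwMonomial (e : Fin 3 →₀ ℕ) :
    ι R (b 1) * pbwMonomial b e = pbwMonomial b (e + Finsupp.single 1 1) := by
  simp [pbwMonomial, pow_succ', mul_assoc]

theorem IsWeightBasis.ι_y_mul_pbwMonomial (hb : IsWeightBasis b n m) (e : Fin 3 →₀ ℕ) :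
    ι R (b 2) * pbwMonomial b e = pbwMonomial b (e + Finsupp.single 2 1) := by
  have hxy : Commute (ι R (b 1)) (ι R (b 2)) := by
    rw [commute_iff_eq, ι_mul_ι, hb.lie_x_y, map_zero, add_zero]
  simp [pbwMonomial, -ι_apply, pow_succ', ← mul_assoc, (hxy.pow_left (e 1)).eq]

theorem IsWeightBasis.ι_h_mul_pbwMonomial (hb : IsWeightBasis b n m) (e : Fin 3 →₀ ℕ) :
    ι R (b 0) * pbwMonomial b e = pbwMonomial b (e + Finsupp.single 0 1) +
      ((e 1 : R) * n + (e 2 : R) * m) • pbwMonomial b e := by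
  have hhx := ι_mul_ι (R := R) (b 0) (b 1)
  have hhy := ι_mul_ι (R := R) (b 0) (b 2)
  rw [hb.lie_h_x, map_smul] at hhx
  rw [hb.lie_h_y, map_smul] at hhy
  rw [← pbwMonomial_mul_ι_h, pbwMonomial, ← mul_assoc, ← mul_assoc,
    mul_pow_eq_pow_mul_add_smul hhx, add_mul, mul_assoc _ (ι R (b 0)),
    mul_pow_eq_pow_mul_add_smul hhy]
  simp only [mul_add, add_mul, mul_smul_comm, smul_mul_assoc, mul_assoc, add_smul, ← pow_succ,
    ← pow_succ']
  abel

theorem IsWeightBasis.lift_polyRep_pbwMonomial_one (hb : IsWeightBasis b n m)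
    (e : Fin 3 →₀ ℕ) : lift R hb.polyRep (pbwMonomial b e) 1 = MvPolynomial.monomial e 1 := by
  have hh : lift R hb.polyRep (ι R (b 0)) = PolyModel.h n m :=
    (lift_ι_apply _ _ _).trans (b.constr_basis _ _ _)
  have hx : lift R hb.polyRep (ι R (b 1)) = PolyModel.x R :=
    (lift_ι_apply _ _ _).trans (b.constr_basis _ _ _)
  have hy : lift R hb.polyRep (ι R (b 2)) = PolyModel.y R :=
    (lift_ι_apply _ _ _).trans (b.constr_basis _ _ _)
  rw [pbwMonomial, map_mul, map_mul, map_pow, map_pow, map_pow, hh, hx, hy, Module.End.mul_apply,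
    Module.End.mul_apply, PolyModel.h_pow_apply_one, PolyModel.x, PolyModel.y,
    LinearMap.pow_mulLeft, LinearMap.pow_mulLeft, LinearMap.mulLeft_apply,
    LinearMap.mulLeft_apply, MvPolynomial.monomial_eq, Finsupp.prod_fintype _ _ fun _ => pow_zero _,
    Fin.prod_univ_three, MvPolynomial.C_1, one_mul]
  ring

theorem IsWeightBasis.linearIndependent_pbwMonomial (hb : IsWeightBasis b n m) :
    LinearIndependent R (pbwMonomial b) := by
  refine LinearIndependent.of_comp (LinearMap.applyₗ 1 ∘ₗ (lift R hb.polyRep).toLinearMap) ?_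
  have himage : (LinearMap.applyₗ 1 ∘ₗ (lift R hb.polyRep).toLinearMap) ∘ pbwMonomial b =
      MvPolynomial.basisMonomials (Fin 3) R := by
    ext1 e
    simp [hb.lift_polyRep_pbwMonomial_one]
  rw [himage]
  exact (MvPolynomial.basisMonomials (Fin 3) R).linearIndependent

theorem IsWeightBasis.span_pbwMonomial (hb : IsWeightBasis b n m) :
    Submodule.span R (Set.range (pbwMonomial b)) = ⊤ := by
  set N := Submodule.span R (Set.range (pbwMonomial b))
  have hstable (a : UniversalEnvelopingAlgebra R g) (ha : ∀ e, a * pbwMonomial b e ∈ N) :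
      ∀ u ∈ N, a * u ∈ N := fun u hu =>
    (Submodule.span_le (p := N.comap (LinearMap.mulLeft R a))).mpr
      (by rintro _ ⟨e, rfl⟩; exact ha e) hu
  have hmem (e : Fin 3 →₀ ℕ) : pbwMonomial b e ∈ N := Submodule.subset_span ⟨e, rfl⟩
  refine Submodule.eq_top_of_one_mem_of_mul_mem (adjoin_range_ι_basis b)
    (by simpa [pbwMonomial] using hmem 0) ?_
  rintro _ ⟨i, rfl⟩
  refine hstable _ fun e => ?_
  fin_cases i
  · show ι R (b 0) * _ ∈ N
    rw [hb.ι_h_mul_pbwMonomial]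
    exact add_mem (hmem _) (N.smul_mem _ (hmem e))
  · show ι R (b 1) * _ ∈ N
    exact ι_x_mul_pbwMonomial b e ▸ hmem _
  · show ι R (b 2) * _ ∈ N
    exact hb.ι_y_mul_pbwMonomial e ▸ hmem _

noncomputable def IsWeightBasis.pbwBasis (hb : IsWeightBasis b n m) :
    Module.Basis (Fin 3 →₀ ℕ) R (UniversalEnvelopingAlgebra R g) :=
  Module.Basis.mk hb.linearIndependent_pbwMonomial hb.span_pbwMonomial.ge

theorem IsWeightBasis.pbwBasis_apply (hb : IsWeightBasis b n m) (e : Fin 3 →₀ ℕ) :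
    hb.pbwBasis e = pbwMonomial b e :=
  Module.Basis.mk_apply _ _ _

end PBW

section Center

open Polynomial

variable {R g : Type*} [CommRing R] [LieRing g] [LieAlgebra R g] {b : Module.Basis (Fin 3) R g}

theorem IsWeightBasis.eq_zero_of_ι_x_mul_aeval_eq_zero {n m : R} (hb : IsWeightBasis b n m)
    {q : R[X]} (hq : ι R (b 1) * aeval (ι R (b 0)) q = 0) : q = 0 := by
  have hinj : Function.Injective fun k : ℕ => Finsupp.single (1 : Fin 3) 1 + Finsupp.single 0 k :=
    fun k l hkl => Finsupp.single_injective 0 (add_left_cancel hkl)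
  have hrepr (q : R[X]) (a : ℕ) : hb.pbwBasis.repr (ι R (b 1) * aeval (ι R (b 0)) q)
      (Finsupp.single 1 1 + Finsupp.single 0 a) = q.coeff a := by
    induction q using Polynomial.induction_on' with
    | add p q hp hq => simp only [map_add, mul_add, Finsupp.add_apply, hp, hq, coeff_add]
    | monomial k r =>
      have hmon : ι R (b 1) * aeval (ι R (b 0)) (monomial k r) =
          r • hb.pbwBasis (Finsupp.single 1 1 + Finsupp.single 0 k) := by
        simp [hb.pbwBasis_apply, pbwMonomial, -ι_apply, aeval_monomial, ← Algebra.smul_def]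
      rw [hmon, map_smul, Module.Basis.repr_self, Finsupp.smul_single, smul_eq_mul, mul_one,
        Finsupp.single_apply_left hinj, Finsupp.single_apply, coeff_monomial]
  ext a
  rw [← hrepr, hq, map_zero, Finsupp.zero_apply, coeff_zero]

variable [IsDomain R] [CharZero R] {n m : ℕ}

theorem IsWeightBasis.exists_aeval_eq_of_mem_center (hb : IsWeightBasis b (n : R) (m : R))
    (hn : 0 < n) (hm : 0 < m) {z : UniversalEnvelopingAlgebra R g}
    (hz : z ∈ Subalgebra.center R (UniversalEnvelopingAlgebra R g)) :
    ∃ p : R[X], aeval (ι R (b 0)) p = z := by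
  set B := hb.pbwBasis
  set ad := LinearMap.mulLeft R (ι R (b 0)) - LinearMap.mulRight R (ι R (b 0))
  have had (e : Fin 3 →₀ ℕ) : ad (B e) = ((e 1 : R) * n + (e 2 : R) * m) • B e := by
    simp only [ad, B, LinearMap.sub_apply, LinearMap.mulLeft_apply, LinearMap.mulRight_apply,
      hb.pbwBasis_apply, hb.ι_h_mul_pbwMonomial, pbwMonomial_mul_ι_h, add_sub_cancel_left]
  have hsupp : ↑(B.repr z).support ⊆ {e : Fin 3 →₀ ℕ | e 1 = 0 ∧ e 2 = 0} := by
    intro e he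
    have hrepr := B.repr_apply_of_forall_apply_eq_smul had z e
    have hadz : ad z = 0 := sub_eq_zero.mpr (Subalgebra.mem_center_iff.mp hz _)
    rw [hadz, map_zero, Finsupp.zero_apply, eq_comm, mul_eq_zero] at hrepr
    have hweight : e 1 * n + e 2 * m = 0 := by
      exact_mod_cast hrepr.resolve_right (Finsupp.mem_support_iff.mp he)
    simpa [hn.ne', hm.ne'] using hweight
  refine (Submodule.span_le (p := Subalgebra.toSubmodule (aeval (ι R (b 0))).range)).mpr ?_
    (B.mem_span_image.mpr hsupp)
  rintro _ ⟨e, ⟨h1, h2⟩, rfl⟩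
  exact ⟨X ^ e 0, by simp [B, hb.pbwBasis_apply, pbwMonomial, h1, h2]⟩

theorem IsWeightBasis.eq_C_of_aeval_mem_center (hb : IsWeightBasis b (n : R) (m : R))
    (hn : 0 < n) {p : R[X]}
    (hp : aeval (ι R (b 0)) p ∈ Subalgebra.center R (UniversalEnvelopingAlgebra R g)) :
    p = C (p.eval 0) := by
  refine eq_C_of_comp_X_add_C_eq_self (c := (n : R)) (Nat.cast_ne_zero.mpr hn.ne') ?_
  have hhx : ι R (b 0) * ι R (b 1) = ι R (b 1) * ι R (b 0) + (n : R) • ι R (b 1) := by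
    rw [ι_mul_ι, hb.lie_h_x, map_smul]
  have hcomm := Subalgebra.mem_center_iff.mp hp (ι R (b 1))
  rw [aeval_mul_eq_mul_aeval_comp hhx] at hcomm
  refine (sub_eq_zero.mp (hb.eq_zero_of_ι_x_mul_aeval_eq_zero ?_)).symm
  rw [map_sub, mul_sub, hcomm, sub_self]

end Center

theorem center_uea_trivial_general
    (g : Type) [LieRing g] [LieAlgebra ℂ g]
    (b : Module.Basis (Fin 3) ℂ g)
    (n m : ℕ) (hn : 0 < n) (hm : 0 < m)
    (hbr1 : ⁅b 0, b 1⁆ = (n : ℂ) • b 1)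
    (hbr2 : ⁅b 0, b 2⁆ = (m : ℂ) • b 2)
    (hbr3 : ⁅b 1, b 2⁆ = 0) :
    Subalgebra.center ℂ (UniversalEnvelopingAlgebra ℂ g) = ⊥ := by
  have hb : IsWeightBasis b (n : ℂ) (m : ℂ) := ⟨hbr1, hbr2, hbr3⟩
  refine le_antisymm (fun z hz => ?_) bot_le
  obtain ⟨p, rfl⟩ := hb.exists_aeval_eq_of_mem_center hn hm hz
  rw [hb.eq_C_of_aeval_mem_center hn hz, Polynomial.aeval_C]
  exact Subalgebra.algebraMap_mem _ _

/-- Let `g` be the Lie algebra over `ℂ` with basis `h, x, y` and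
brackets `[h,x] = n x`, `[h,y] = m y`, `[x,y] = 0`, where `n, m` are positive coprime
integers.  Then the center of `U(g)` is trivial, i.e. reduces to the scalars `ℂ`. -/
theorem center_uea_trivial
    (g : Type) [LieRing g] [LieAlgebra ℂ g]
    (b : Module.Basis (Fin 3) ℂ g)
    (n m : ℕ) (hn : 0 < n) (hm : 0 < m) (hnm : Nat.Coprime n m)
    (hbr1 : ⁅b 0, b 1⁆ = (n : ℂ) • b 1)
    (hbr2 : ⁅b 0, b 2⁆ = (m : ℂ) • b 2)
    (hbr3 : ⁅b 1, b 2⁆ = 0) :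
    Subalgebra.center ℂ (UniversalEnvelopingAlgebra ℂ g) = ⊥ :=
  center_uea_trivial_general g b n m hn hm hbr1 hbr2 hbr3
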